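/- arXiv:math/0008069 — 2 statements merged into one kernel-verified Lean document; each statement's English description precedes it below -/
import Mathlib

section
/- Let A,B > 0 and a,b,c,d ∈ ℝ with a,b,c,d all positive. If f(t) := 1 − A t^a(1−t)^b − B t^c(1−t)^d has no degenerate roots in (0,1), then f has fewer than 6 roots in the open interval (0,1). -/
/-!
Dividing `f` by `t ^ a * (1 - t) ^ b` gives `F` with `F' = t ^ (-a - 1) * (1 - t) ^ (-b - 1) * h`,
where `h 0 = -a < 0`, `h' = dh`, `dh' = -B * t ^ (c - 2) * (1 - t) ^ (d - 2) * p` and `p` is a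
cubic with leading coefficient `-(c + d - a - b) * (c + d) * (c + d + 1)`. By Rolle, six roots of
`f` in `(0, 1)` give five zeros of `h`, four of `dh` and three of `p`. The mean value theorem for
`h` on `[0, w₀]` and then for `dh` on `[ξ, y₀]` (`w₀`, `y₀` the first zeros of `h`, `dh`) gives a
point left of all zeros of `p` where `p > 0`, so the leading coefficient of `p` is negative, i.e.
`a + b < c + d`. Exchanging the two terms of `f` gives the reverse inequality.
-/

open Real Set

theorem Set.exists_strictMono_fin_of_le_encard {α : Type*} [LinearOrder α] {s : Set α} {n : ℕ}
    (h : n ≤ s.encard) : ∃ z : Fin n → α, StrictMono z ∧ ∀ i, z i ∈ s := by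
  obtain ⟨t, hts, htn⟩ := s.exists_subset_encard_eq h
  have ht : t.Finite := finite_of_encard_eq_coe htn
  have hcard : ht.toFinset.card = n := by
    rw [← ENat.natCast_inj, ← ht.encard_eq_coe_toFinset_card, htn]
  exact ⟨fun i => ht.toFinset.orderEmbOfFin hcard i, (ht.toFinset.orderEmbOfFin hcard).strictMono,
    fun i => hts (ht.mem_toFinset.mp (ht.toFinset.orderEmbOfFin_mem hcard i))⟩

theorem exists_strictMono_interlacing_deriv_eq_zero {g g' : ℝ → ℝ} {s : Set ℝ}
    [hs : s.OrdConnected] (hder : ∀ x ∈ s, HasDerivAt g (g' x) x) {n : ℕ}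
    {z : Fin (n + 1) → ℝ} (hz : StrictMono z) (hzs : ∀ i, z i ∈ s) (hgz : ∀ i, g (z i) = 0) :
    ∃ w : Fin n → ℝ, StrictMono w ∧ (∀ i, w i ∈ s) ∧
      (∀ i, w i ∈ Ioo (z i.castSucc) (z i.succ)) ∧ ∀ i, g' (w i) = 0 := by
  have hrolle (i : Fin n) : ∃ w ∈ Ioo (z i.castSucc) (z i.succ), g' w = 0 := by
    have hsub : Icc (z i.castSucc) (z i.succ) ⊆ s := hs.out (hzs _) (hzs _)
    exact exists_hasDerivAt_eq_zero (hz i.castSucc_lt_succ)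
      (fun x hx => (hder x (hsub hx)).continuousAt.continuousWithinAt) (by rw [hgz, hgz])
      (fun x hx => hder x (hsub (Ioo_subset_Icc_self hx)))
  choose w hw hw0 using hrolle
  refine ⟨w, fun i j hij => ?_,
    fun i => hs.out (hzs _) (hzs _) (Ioo_subset_Icc_self (hw i)), hw, hw0⟩
  calc w i < z i.succ := (hw i).2
    _ ≤ z j.castSucc := hz.monotone (Fin.succ_le_castSucc_iff.mpr hij)
    _ < w j := (hw j).1

theorem rpow_mul_one_sub_rpow_pos {t : ℝ} (ht : t ∈ Ioo (0 : ℝ) 1) (p q : ℝ) :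
    0 < t ^ p * (1 - t) ^ q :=
  mul_pos (rpow_pos_of_pos ht.1 p) (rpow_pos_of_pos (sub_pos.mpr ht.2) q)

theorem hasDerivAt_rpow_mul_one_sub_rpow (p q : ℝ) {t : ℝ} (ht : t ∈ Ioo (0 : ℝ) 1) :
    HasDerivAt (fun s : ℝ => s ^ p * (1 - s) ^ q)
      (t ^ (p - 1) * (1 - t) ^ (q - 1) * (p * (1 - t) - q * t)) t := by
  have ht' : 0 < 1 - t := sub_pos.mpr ht.2
  have hright : HasDerivAt (fun s : ℝ => (1 - s) ^ q) (q * (1 - t) ^ (q - 1) * -1) t :=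
    (hasDerivAt_rpow_const (Or.inl ht'.ne')).comp t ((hasDerivAt_id t).const_sub 1)
  refine ((hasDerivAt_rpow_const (Or.inl ht.1.ne')).mul hright).congr_deriv ?_
  have h₀ : t ≠ 0 := ht.1.ne'
  have h₁ : 1 - t ≠ 0 := ht'.ne'
  rw [rpow_sub_one h₀, rpow_sub_one h₁]
  field_simp
  ring

theorem cubic_leading_neg_of_pos_left {P : ℝ → ℝ} {k r₂ r₁ r₀ : ℝ}
    (hP : ∀ t, P t = k * t ^ 3 + r₂ * t ^ 2 + r₁ * t + r₀) {x₁ x₂ x₃ s : ℝ}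
    (h₁₂ : x₁ < x₂) (h₂₃ : x₂ < x₃) (hx₁ : P x₁ = 0) (hx₂ : P x₂ = 0) (hx₃ : P x₃ = 0)
    (hs : s < x₁) (hPs : 0 < P s) : k < 0 := by
  have hfactor : P s = k * (s - x₁) * (s - x₂) * (s - x₃) := by
    have h₁₂' : x₁ - x₂ ≠ 0 := by linarith
    have h₂₃' : x₂ - x₃ ≠ 0 := by linarith
    have h₁₃' : x₁ - x₃ ≠ 0 := by linarith
    rw [hP] at hx₁ hx₂ hx₃ ⊢
    have e₁₂ : r₂ * (x₁ + x₂) + r₁ + k * (x₁ ^ 2 + x₁ * x₂ + x₂ ^ 2) = 0 :=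
      (mul_eq_zero.mp (by linear_combination hx₁ - hx₂ : (x₁ - x₂) * _ = 0)).resolve_left
        h₁₂'
    have e₂₃ : r₂ * (x₂ + x₃) + r₁ + k * (x₂ ^ 2 + x₂ * x₃ + x₃ ^ 2) = 0 :=
      (mul_eq_zero.mp (by linear_combination hx₂ - hx₃ : (x₂ - x₃) * _ = 0)).resolve_left
        h₂₃'
    have e₂ : r₂ + k * (x₁ + x₂ + x₃) = 0 :=
      (mul_eq_zero.mp (by linear_combination e₁₂ - e₂₃ : (x₁ - x₃) * _ = 0)).resolve_left
        h₁₃'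
    have e₁ : r₁ - k * (x₁ * x₂ + x₁ * x₃ + x₂ * x₃) = 0 := by
      linear_combination e₁₂ - (x₁ + x₂) * e₂
    have e₀ : r₀ + k * (x₁ * x₂ * x₃) = 0 := by
      linear_combination hx₁ - x₁ ^ 2 * e₂ - x₁ * e₁
    linear_combination s ^ 2 * e₂ + s * e₁ + e₀
  have hneg : (s - x₁) * (s - x₂) * (s - x₃) < 0 :=
    mul_neg_of_pos_of_neg (mul_pos_of_neg_of_neg (by linarith) (by linarith)) (by linarith)
  rw [hfactor, mul_assoc, mul_assoc, ← mul_assoc (s - x₁)] at hPs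
  exact neg_of_mul_pos_left hPs hneg.le

namespace CaseD

variable (a b c d A B : ℝ)

noncomputable def F (t : ℝ) : ℝ :=
  t ^ (-a) * (1 - t) ^ (-b) - A - B * (t ^ (c - a) * (1 - t) ^ (d - b))

noncomputable def h (t : ℝ) : ℝ :=
  (a + b) * t - a - B * (t ^ c * (1 - t) ^ d) * ((c - a) - (c + d - a - b) * t)

def q (t : ℝ) : ℝ :=
  (c * (1 - t) - d * t) * ((c - a) - (c + d - a - b) * t) - (c + d - a - b) * (t * (1 - t))

noncomputable def dh (t : ℝ) : ℝ :=
  (a + b) - B * (t ^ (c - 1) * (1 - t) ^ (d - 1) * q a b c d t)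

def p (t : ℝ) : ℝ :=
  ((c - 1) * (1 - t) - (d - 1) * t) * q a b c d t
    + t * (1 - t) * (-(c + d) * ((c - a) - (c + d - a - b) * t)
        - (c + d - a - b) * (c * (1 - t) - d * t) - (c + d - a - b) * (1 - 2 * t))

variable {a b c d A B}

theorem F_eq {t : ℝ} (ht : t ∈ Ioo (0 : ℝ) 1) :
    F a b c d A B t = t ^ (-a) * (1 - t) ^ (-b) *
      (1 - A * t ^ a * (1 - t) ^ b - B * t ^ c * (1 - t) ^ d) := by
  have h₀ : t ^ a ≠ 0 := (rpow_pos_of_pos ht.1 a).ne'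
  have ht' : 0 < 1 - t := sub_pos.mpr ht.2
  have h₁ : (1 - t) ^ b ≠ 0 := (rpow_pos_of_pos ht' b).ne'
  rw [F, rpow_neg ht.1.le, rpow_neg ht'.le, rpow_sub ht.1, rpow_sub ht']
  field_simp

theorem hasDerivAt_F {t : ℝ} (ht : t ∈ Ioo (0 : ℝ) 1) :
    HasDerivAt (F a b c d A B) (t ^ (-a - 1) * (1 - t) ^ (-b - 1) * h a b c d B t) t := by
  have ht' : 0 < 1 - t := sub_pos.mpr ht.2
  have e₁ : t ^ (c - a - 1) = t ^ (-a - 1) * t ^ c := by rw [← rpow_add ht.1]; ring_nf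
  have e₂ : (1 - t) ^ (d - b - 1) = (1 - t) ^ (-b - 1) * (1 - t) ^ d := by
    rw [← rpow_add ht']; ring_nf
  refine (((hasDerivAt_rpow_mul_one_sub_rpow (-a) (-b) ht).sub_const A).sub
    ((hasDerivAt_rpow_mul_one_sub_rpow (c - a) (d - b) ht).const_mul B)).congr_deriv ?_
  rw [h, e₁, e₂]
  ring

theorem hasDerivAt_h {t : ℝ} (ht : t ∈ Ioo (0 : ℝ) 1) :
    HasDerivAt (h a b c d B) (dh a b c d B t) t := by
  have hL : HasDerivAt (fun s : ℝ => (c - a) - (c + d - a - b) * s) (-(c + d - a - b)) t := by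
    simpa using ((hasDerivAt_id t).const_mul (c + d - a - b)).const_sub (c - a)
  have hlin : HasDerivAt (fun s : ℝ => (a + b) * s - a) (a + b) t := by
    simpa using ((hasDerivAt_id t).const_mul (a + b)).sub_const a
  refine (hlin.sub (((hasDerivAt_rpow_mul_one_sub_rpow c d ht).const_mul B).mul hL)).congr_deriv ?_
  have h₀ : t ≠ 0 := ht.1.ne'
  have h₁ : 1 - t ≠ 0 := (sub_pos.mpr ht.2).ne'
  rw [dh, q, rpow_sub_one h₀, rpow_sub_one h₁]
  field_simp
  ring

theorem hasDerivAt_dh {t : ℝ} (ht : t ∈ Ioo (0 : ℝ) 1) :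
    HasDerivAt (dh a b c d B) (-B * (t ^ (c - 2) * (1 - t) ^ (d - 2) * p a b c d t)) t := by
  have hq : HasDerivAt (q a b c d) (-(c + d) * ((c - a) - (c + d - a - b) * t)
      - (c + d - a - b) * (c * (1 - t) - d * t) - (c + d - a - b) * (1 - 2 * t)) t := by
    unfold q
    have h1 : HasDerivAt (fun s : ℝ => 1 - s) (-1) t := (hasDerivAt_id t).const_sub 1
    have hu : HasDerivAt (fun s : ℝ => c * (1 - s) - d * s) (c * -1 - d * 1) t :=
      (h1.const_mul c).sub ((hasDerivAt_id' t).const_mul d)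
    have hL : HasDerivAt (fun s : ℝ => (c - a) - (c + d - a - b) * s) (-(c + d - a - b)) t := by
      simpa using ((hasDerivAt_id t).const_mul (c + d - a - b)).const_sub (c - a)
    have hw : HasDerivAt (fun s : ℝ => s * (1 - s)) (1 * (1 - t) + t * -1) t :=
      (hasDerivAt_id t).mul h1
    refine ((hu.mul hL).sub (hw.const_mul (c + d - a - b))).congr_deriv ?_
    ring
  refine ((hasDerivAt_const t (a + b)).sub
    (((hasDerivAt_rpow_mul_one_sub_rpow (c - 1) (d - 1) ht).mul hq).const_mul B)).congr_deriv ?_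
  have h₀ : t ≠ 0 := ht.1.ne'
  have h₁ : 1 - t ≠ 0 := (sub_pos.mpr ht.2).ne'
  have e₁ : t ^ (c - 1 - 1) = t ^ (c - 2) := by ring_nf
  have e₂ : (1 - t) ^ (d - 1 - 1) = (1 - t) ^ (d - 2) := by ring_nf
  have e₃ : t ^ (c - 1) = t ^ (c - 2) * t := by rw [← rpow_add_one h₀]; ring_nf
  have e₄ : (1 - t) ^ (d - 1) = (1 - t) ^ (d - 2) * (1 - t) := by
    rw [← rpow_add_one h₁]; ring_nf
  rw [p, e₁, e₂, e₃, e₄]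
  ring

-- The lower coefficients are read off from the values of `p` at `0` and `±1`.
theorem exists_coeff_p : ∃ r₂ r₁ r₀ : ℝ, ∀ t, p a b c d t =
    -((c + d - a - b) * (c + d) * (c + d + 1)) * t ^ 3 + r₂ * t ^ 2 + r₁ * t + r₀ :=
  ⟨(p a b c d 1 + p a b c d (-1)) / 2 - p a b c d 0,
    (p a b c d 1 - p a b c d (-1)) / 2 + (c + d - a - b) * (c + d) * (c + d + 1),
    p a b c d 0, fun t => by simp only [p, q]; ring⟩

theorem exists_pos_p (hB : 0 < B) (ha : 0 < a) (hc : 0 < c) {w y : ℝ} (hw : w ∈ Ioo (0 : ℝ) 1)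
    (hwy : w < y) (hy : y < 1) (hhw : h a b c d B w = 0) (hdhy : dh a b c d B y = 0) :
    ∃ s ∈ Ioo 0 y, 0 < p a b c d s := by
  have hcont : ContinuousOn (h a b c d B) (Icc 0 w) := fun x hx => by
    have hx1 : 1 - x ≠ 0 := (sub_pos.mpr (hx.2.trans_lt hw.2)).ne'
    refine ContinuousAt.continuousWithinAt ?_
    unfold h
    fun_prop (disch := first | exact Or.inr hc.le | exact Or.inl hx1)
  have hh0 : h a b c d B 0 = -a := by simp [h, zero_rpow hc.ne']
  obtain ⟨ξ, hξ, hdhξ⟩ := exists_hasDerivAt_eq_slope (h a b c d B) (dh a b c d B) hw.1 hcont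
    fun x hx => hasDerivAt_h ⟨hx.1, hx.2.trans hw.2⟩
  have hdhξ_pos : 0 < dh a b c d B ξ := by
    rw [hdhξ, hhw, hh0]
    exact div_pos (by linarith) (by linarith [hw.1])
  have hsub : Icc ξ y ⊆ Ioo 0 1 := fun x hx => ⟨hξ.1.trans_le hx.1, hx.2.trans_lt hy⟩
  obtain ⟨s, hs, hds⟩ := exists_hasDerivAt_eq_slope (dh a b c d B)
    (fun t => -B * (t ^ (c - 2) * (1 - t) ^ (d - 2) * p a b c d t)) (hξ.2.trans hwy)
    (fun x hx => (hasDerivAt_dh (hsub hx)).continuousAt.continuousWithinAt)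
    fun x hx => hasDerivAt_dh (hsub (Ioo_subset_Icc_self hx))
  refine ⟨s, ⟨hξ.1.trans hs.1, hs.2⟩, ?_⟩
  have hneg : -B * (s ^ (c - 2) * (1 - s) ^ (d - 2) * p a b c d s) < 0 := by
    rw [hds, hdhy]
    exact div_neg_of_neg_of_pos (by linarith) (by linarith [hs.1, hs.2])
  exact pos_of_mul_pos_right (pos_of_mul_pos_right (by linarith : 0 < B * _) hB.le)
    (rpow_mul_one_sub_rpow_pos (hsub (Ioo_subset_Icc_self hs)) _ _).le

theorem add_lt_add_of_six_roots (hB : 0 < B) (ha : 0 < a) (hc : 0 < c) (hd : 0 < d)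
    {z : Fin 6 → ℝ} (hz : StrictMono z) (hz01 : ∀ i, z i ∈ Ioo (0 : ℝ) 1)
    (hfz : ∀ i, 1 - A * z i ^ a * (1 - z i) ^ b - B * z i ^ c * (1 - z i) ^ d = 0) :
    a + b < c + d := by
  obtain ⟨w, hw_mono, hw01, -, hFw⟩ := exists_strictMono_interlacing_deriv_eq_zero
    (fun t ht => hasDerivAt_F (A := A) ht) hz hz01 fun i => by rw [F_eq (hz01 i), hfz, mul_zero]
  have hhw (i : Fin 5) : h a b c d B (w i) = 0 :=
    (mul_eq_zero.mp (hFw i)).resolve_left (rpow_mul_one_sub_rpow_pos (hw01 i) _ _).ne'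
  obtain ⟨y, hy_mono, hy01, hy_lace, hdhy⟩ :=
    exists_strictMono_interlacing_deriv_eq_zero (fun t ht => hasDerivAt_h ht) hw_mono hw01 hhw
  obtain ⟨x, hx_mono, hx01, hx_lace, hx⟩ :=
    exists_strictMono_interlacing_deriv_eq_zero (fun t ht => hasDerivAt_dh ht) hy_mono hy01 hdhy
  have hpx (i : Fin 3) : p a b c d (x i) = 0 := by
    have hW := rpow_mul_one_sub_rpow_pos (hx01 i) (c - 2) (d - 2)
    simpa [hB.ne', hW.ne'] using hx i
  obtain ⟨s, hs, hps⟩ :=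
    exists_pos_p hB ha hc (hw01 0) (hy_lace 0).1 (hy01 0).2 (hhw 0) (hdhy 0)
  obtain ⟨r₂, r₁, r₀, hp⟩ := exists_coeff_p (a := a) (b := b) (c := c) (d := d)
  have hlead := cubic_leading_neg_of_pos_left hp (hx_mono (by decide : (0 : Fin 3) < 1))
    (hx_mono (by decide : (1 : Fin 3) < 2)) (hpx 0) (hpx 1) (hpx 2)
    (hs.2.trans (hx_lace 0).1) hps
  have hcd : 0 < (c + d) * (c + d + 1) := by positivity
  nlinarith

end CaseD

theorem fewer_than_six_roots_case_D_general
    (a b c d A B : ℝ) (hA : 0 < A) (hB : 0 < B)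
    (ha : 0 < a) (hb : 0 < b) (hc : 0 < c) (hd : 0 < d)
    (f : ℝ → ℝ)
    (hf : f = fun t : ℝ => 1 - A * t ^ a * (1 - t) ^ b - B * t ^ c * (1 - t) ^ d) :
    {t ∈ Set.Ioo (0 : ℝ) 1 | f t = 0}.encard < 6 := by
  by_contra! h6
  obtain ⟨z, hz, hz_roots⟩ := Set.exists_strictMono_fin_of_le_encard h6
  have hz01 (i : Fin 6) : z i ∈ Ioo (0 : ℝ) 1 := (hz_roots i).1
  have hfz (i : Fin 6) : 1 - A * z i ^ a * (1 - z i) ^ b - B * z i ^ c * (1 - z i) ^ d = 0 := by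
    simpa [hf] using (hz_roots i).2
  have hlt := CaseD.add_lt_add_of_six_roots hB ha hc hd hz hz01 hfz
  have hgt := CaseD.add_lt_add_of_six_roots (b := d) (A := B) (B := A) hA hc ha hb hz hz01
    fun i => by linarith [hfz i]
  linarith

/-- Case D: `a, b, c, d > 0`.
If `f(t) = 1 − A t^a (1−t)^b − B t^c (1−t)^d` has no degenerate roots in `(0,1)`
(a root `ζ` is degenerate if `f ζ = 0` and `f' ζ = 0`), then `f` has fewer than 6
roots in `(0,1)`.  (`^` is `Real.rpow`.) -/
theorem fewer_than_six_roots_case_D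
    (a b c d A B : ℝ) (hA : 0 < A) (hB : 0 < B)
    (ha : 0 < a) (hb : 0 < b) (hc : 0 < c) (hd : 0 < d)
    (f : ℝ → ℝ)
    (hf : f = fun t : ℝ => 1 - A * t ^ a * (1 - t) ^ b - B * t ^ c * (1 - t) ^ d)
    (hnd : ∀ t ∈ Set.Ioo (0 : ℝ) 1, f t = 0 → deriv f t ≠ 0) :
    {t ∈ Set.Ioo (0 : ℝ) 1 | f t = 0}.encard < 6 :=
  fewer_than_six_roots_case_D_general a b c d A B hA hB ha hb hc hd f hf
end

section
/- (Generalized Descartes' Rule of Signs.) Let c₁,…,c_m be real numbers, not all zero, and let a₁ < a₂ < … < a_m be real numbers. Then the number of roots in (0,∞) of the function x ↦ Σ_{i=1}^m c_i x^{a_i} is at most the number of sign alternations of the sequence (c₁,…,c_m). In particular, a univariate m-nomial with real exponents has at most m−1 positive roots. -/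
/-!
Induction on the number of sign alternations. With no alternation all nonzero coefficients
share a sign, so the sum has no positive root. Otherwise pick an alternation `(k, k')` and an
exponent `b` strictly between `a k` and `a k'`. Dividing by `x ^ b` does not change the positive
roots, and the derivative of `∑ c i * x ^ (a i - b)` is again such a sum, with coefficients
`c i * (a i - b)`: this flips the signs exactly up to `k`, so it has one alternation fewer. By
Rolle's theorem a function has at most one more zero on an interval than its derivative.
-/

open Real Set

/-- The number of sign alternations of a finite sequence `c : Fin m → ℝ`: the number
of pairs `j < j'` with `c j * c j' < 0` and `c i = 0` for all `j < i < j'`. -/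
noncomputable def signAlternations {m : ℕ} (c : Fin m → ℝ) : ℕ :=
  {p : Fin m × Fin m |
    p.1 < p.2 ∧ c p.1 * c p.2 < 0 ∧ ∀ i, p.1 < i → i < p.2 → c i = 0}.ncard

theorem encard_zeros_le_encard_zeros_deriv_add_one {f f' : ℝ → ℝ} {s : Set ℝ}
    (hs : s.OrdConnected) (hf : ∀ x ∈ s, HasDerivAt f (f' x) x) :
    {x ∈ s | f x = 0}.encard ≤ {x ∈ s | f' x = 0}.encard + 1 := by
  set T := {x ∈ s | f' x = 0}
  obtain hT | hT := T.finite_or_infinite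
  swap
  · simp [hT.encard_eq]
  by_contra! hlt
  obtain ⟨S, hSZ, hScard⟩ := exists_subset_encard_eq (Order.add_one_le_of_lt hlt)
  have hSfin : S.Finite := encard_ne_top_iff.1 (by simp [hScard, hT])
  have hinterleaved : ∀ x ∈ hSfin.toFinset, ∀ y ∈ hSfin.toFinset, x < y →
      (∀ z ∈ hSfin.toFinset, z ∉ Ioo x y) → ∃ z ∈ hT.toFinset, x < z ∧ z < y := by
    intro x hx y hy hxy _
    rw [Finite.mem_toFinset] at hx hy
    obtain ⟨hxs, hx0⟩ := hSZ hx
    obtain ⟨hys, hy0⟩ := hSZ hy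
    have hIcc : Icc x y ⊆ s := hs.out hxs hys
    obtain ⟨z, hz, hz0⟩ := exists_hasDerivAt_eq_zero hxy
      (fun t ht => (hf t (hIcc ht)).continuousAt.continuousWithinAt) (hx0.trans hy0.symm)
      (fun t ht => hf t (hIcc (Ioo_subset_Icc_self ht)))
    exact ⟨z, hT.mem_toFinset.2 ⟨hIcc (Ioo_subset_Icc_self hz), hz0⟩, hz⟩
  have hcard := Finset.card_le_of_interleaved hinterleaved
  rw [hSfin.encard_eq_coe_toFinset_card, hT.encard_eq_coe_toFinset_card] at hScard
  norm_cast at hScard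
  omega

section SignAlternations

variable {m : ℕ}

def signAlternationSet (c : Fin m → ℝ) : Set (Fin m × Fin m) :=
  {p | p.1 < p.2 ∧ c p.1 * c p.2 < 0 ∧ ∀ i, p.1 < i → i < p.2 → c i = 0}

theorem signAlternations_eq_ncard (c : Fin m → ℝ) :
    signAlternations c = (signAlternationSet c).ncard := rfl

theorem signAlternations_le_sub_one (c : Fin m → ℝ) : signAlternations c ≤ m - 1 := by
  -- an alternation `(j, j')` is determined by `j`, since `j'` is the next nonzero entry after `j`
  have hinj : InjOn (fun p : Fin m × Fin m => (p.1 : ℕ)) (signAlternationSet c) := by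
    rintro ⟨j, j₁⟩ ⟨hj₁, h₁, h₁z⟩ ⟨j', j₂⟩ ⟨hj₂, h₂, h₂z⟩ hjj
    obtain rfl : j = j' := Fin.ext hjj
    dsimp only at *
    rcases lt_trichotomy j₁ j₂ with hlt | rfl | hlt
    · simp [h₂z j₁ hj₁ hlt] at h₁
    · rfl
    · simp [h₁z j₂ hj₂ hlt] at h₂
  have hsub : (fun p : Fin m × Fin m => (p.1 : ℕ)) '' signAlternationSet c ⊆
      (Finset.range (m - 1) : Set ℕ) := by
    rintro _ ⟨⟨j, j'⟩, ⟨hlt, -⟩, rfl⟩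
    have := Fin.lt_def.1 hlt
    have := j'.isLt
    simp only [Finset.coe_range, mem_Iio] at *
    omega
  rw [signAlternations_eq_ncard, ← hinj.ncard_image]
  simpa using ncard_le_ncard hsub (Finset.finite_toSet _)

variable {c w : Fin m → ℝ} {k k' : Fin m}

theorem signAlternationSet_nonempty_of_mul_neg {j j' : Fin m} (hlt : j < j')
    (hneg : c j * c j' < 0) : (signAlternationSet c).Nonempty := by
  induction hd : (j' : ℕ) - j using Nat.strong_induction_on generalizing j j' with
  | _ d ih =>
    by_cases hgap : ∀ i, j < i → i < j' → c i = 0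
    · exact ⟨(j, j'), hlt, hneg, hgap⟩
    push Not at hgap
    obtain ⟨i, hji, hij', hi⟩ := hgap
    have hsplit : c j * c i < 0 ∨ c i * c j' < 0 := by
      have hprod : c j * c i * (c i * c j') < 0 := by
        rw [show c j * c i * (c i * c j') = c i ^ 2 * (c j * c j') by ring]
        exact mul_neg_of_pos_of_neg (sq_pos_of_ne_zero hi) hneg
      by_contra! h
      exact hprod.not_ge (mul_nonneg h.1 h.2)
    have := Fin.lt_def.1 hji
    have := Fin.lt_def.1 hij'
    rcases hsplit with h | h
    · exact ih _ (by omega) hji h rfl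
    · exact ih _ (by omega) hij' h rfl

theorem mul_nonneg_of_signAlternations_eq_zero (h : signAlternations c = 0)
    (i j : Fin m) : 0 ≤ c i * c j := by
  have hempty : signAlternationSet c = ∅ := (Set.ncard_eq_zero (Set.toFinite _)).1 h
  by_contra! hneg
  rcases lt_trichotomy i j with hij | rfl | hji
  · exact (signAlternationSet_nonempty_of_mul_neg hij hneg).ne_empty hempty
  · exact (mul_self_nonneg (c i)).not_gt hneg
  · exact (signAlternationSet_nonempty_of_mul_neg hji (by linarith)).ne_empty hempty

theorem le_or_ge_of_mem_signAlternationSet (hkk' : (k, k') ∈ signAlternationSet c) {i : Fin m}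
    (hi : c i ≠ 0) : i ≤ k ∨ k' ≤ i := by
  by_contra! h
  exact hi (hkk'.2.2 i h.1 h.2)

theorem mul_pos_of_gap_ne_signAlternation (hkk' : (k, k') ∈ signAlternationSet c)
    (hneg : ∀ i ≤ k, w i < 0) (hpos : ∀ i, k' ≤ i → 0 < w i) {j j' : Fin m}
    (hjj' : j < j') (hj : c j ≠ 0) (hj' : c j' ≠ 0) (hgap : ∀ i, j < i → i < j' → c i = 0)
    (hne : (j, j') ≠ (k, k')) : 0 < w j * w j' := by
  rcases le_or_ge_of_mem_signAlternationSet hkk' hj' with h' | h'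
  · exact mul_pos_of_neg_of_neg (hneg j (hjj'.le.trans h')) (hneg j' h')
  rcases le_or_ge_of_mem_signAlternationSet hkk' hj with h | h
  · obtain ⟨hlt, hk, -⟩ := hkk'
    obtain rfl : j = k := h.eq_or_lt.resolve_right fun hjk =>
      left_ne_zero_of_mul hk.ne (hgap k hjk (hlt.trans_le h'))
    obtain rfl : j' = k' := (h'.eq_or_lt.resolve_right fun hkj =>
      right_ne_zero_of_mul hk.ne (hgap k' hlt hkj)).symm
    exact absurd rfl hne
  · exact mul_pos (hpos j h) (hpos j' (h.trans hjj'.le))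

theorem signAlternationSet_mul_eq_diff (hkk' : (k, k') ∈ signAlternationSet c)
    (hneg : ∀ i ≤ k, w i < 0) (hpos : ∀ i, k' ≤ i → 0 < w i) :
    signAlternationSet (c * w) = signAlternationSet c \ {(k, k')} := by
  have hzero : ∀ i, c i * w i = 0 ↔ c i = 0 := fun i => by
    refine ⟨fun h => by_contra fun hi => ?_, fun h => by simp [h]⟩
    rcases le_or_ge_of_mem_signAlternationSet hkk' hi with h' | h'
    · exact mul_ne_zero hi (hneg i h').ne h
    · exact mul_ne_zero hi (hpos i h').ne' h
  ext ⟨j, j'⟩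
  simp only [signAlternationSet, mem_ofPred_eq, mem_sdiff, mem_singleton_iff, Pi.mul_apply, hzero,
    mul_mul_mul_comm (c j) (w j)]
  by_cases hjk : (j, j') = (k, k')
  · obtain ⟨rfl, rfl⟩ := Prod.mk.inj hjk
    simp only [not_true_eq_false, and_false, iff_false, not_and]
    exact fun _ h _ => lt_asymm h
      (mul_pos_of_neg_of_neg hkk'.2.1 (mul_neg_of_neg_of_pos (hneg j le_rfl) (hpos j' le_rfl)))
  simp only [hjk, not_false_eq_true, and_true]
  refine and_congr_right fun hjj' => and_congr_left fun hgap => ?_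
  by_cases hc : c j * c j' = 0
  · simp [hc]
  have hw := mul_pos_of_gap_ne_signAlternation hkk' hneg hpos hjj' (left_ne_zero_of_mul hc)
    (right_ne_zero_of_mul hc) hgap hjk
  rw [← not_le, ← not_le, mul_nonneg_iff_of_pos_right hw]

end SignAlternations

section Signomial

variable {m : ℕ}

noncomputable def signomial (c a : Fin m → ℝ) (x : ℝ) : ℝ := ∑ i, c i * x ^ a i

theorem signomial_eq_rpow_mul (c a : Fin m → ℝ) (b : ℝ) {x : ℝ} (hx : 0 < x) :
    signomial c a x = x ^ b * signomial c (fun i => a i - b) x := by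
  simp only [signomial, Finset.mul_sum]
  refine Finset.sum_congr rfl fun i _ => ?_
  rw [mul_left_comm, ← rpow_add hx, add_sub_cancel]

theorem hasDerivAt_signomial (c a : Fin m → ℝ) {x : ℝ} (hx : 0 < x) :
    HasDerivAt (signomial c a) (signomial (c * a) (fun i => a i - 1) x) x := by
  have hterm (i : Fin m) : HasDerivAt (fun y => c i * y ^ a i) (c i * (a i * x ^ (a i - 1))) x :=
    (hasDerivAt_rpow_const (Or.inl hx.ne')).const_mul (c i)
  refine (HasDerivAt.fun_sum (u := Finset.univ) fun i _ => hterm i).congr_deriv ?_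
  simp [signomial, mul_assoc]

theorem signomial_ne_zero_of_signAlternations_eq_zero {c : Fin m → ℝ} (hc : ∃ i, c i ≠ 0)
    (h : signAlternations c = 0) (a : Fin m → ℝ) {x : ℝ} (hx : 0 < x) :
    signomial c a x ≠ 0 := by
  obtain ⟨i₀, hi₀⟩ := hc
  suffices 0 < c i₀ * signomial c a x from right_ne_zero_of_mul this.ne'
  rw [signomial, Finset.mul_sum]
  refine Finset.sum_pos' (fun i _ => ?_) ⟨i₀, Finset.mem_univ _, ?_⟩
  · rw [← mul_assoc]
    exact mul_nonneg (mul_nonneg_of_signAlternations_eq_zero h i₀ i) (rpow_pos_of_pos hx _).le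
  · rw [← mul_assoc]
    exact mul_pos (mul_self_pos.2 hi₀) (rpow_pos_of_pos hx _)

theorem encard_pos_zeros_signomial_le_signAlternations {c : Fin m → ℝ} (hc : ∃ i, c i ≠ 0)
    {a : Fin m → ℝ} (ha : StrictMono a) :
    {x ∈ Ioi 0 | signomial c a x = 0}.encard ≤ signAlternations c := by
  induction hn : signAlternations c generalizing c a with
  | zero =>
    have hempty : {x ∈ Ioi 0 | signomial c a x = 0} = ∅ := eq_empty_of_forall_notMem
      fun x hx => signomial_ne_zero_of_signAlternations_eq_zero hc hn a hx.1 hx.2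
    rw [hempty, encard_empty]
    exact zero_le
  | succ n ih =>
    obtain ⟨⟨k, k'⟩, hkk'⟩ : (signAlternationSet c).Nonempty :=
      nonempty_of_ncard_ne_zero (by rw [← signAlternations_eq_ncard, hn]; omega)
    set b := (a k + a k') / 2
    set w : Fin m → ℝ := fun i => a i - b
    have hlt : a k < a k' := ha hkk'.1
    have hneg : ∀ i ≤ k, w i < 0 := fun i hi => by
      have := ha.monotone hi
      simp only [w, b]; linarith
    have hpos : ∀ i, k' ≤ i → 0 < w i := fun i hi => by
      have := ha.monotone hi
      simp only [w, b]; linarith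
    have hn' : signAlternations (c * w) = n := by
      rw [signAlternations_eq_ncard, signAlternationSet_mul_eq_diff hkk' hneg hpos,
        ncard_sdiff_singleton_of_mem hkk', ← signAlternations_eq_ncard, hn, Nat.add_sub_cancel]
    have hcw : ∃ i, (c * w) i ≠ 0 :=
      ⟨k, mul_ne_zero (left_ne_zero_of_mul hkk'.2.1.ne) (hneg k le_rfl).ne⟩
    have hw : StrictMono fun i => w i - 1 := fun i j hij => by simp only [w]; linarith [ha hij]
    calc {x ∈ Ioi 0 | signomial c a x = 0}.encard
        = {x ∈ Ioi 0 | signomial c w x = 0}.encard := by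
          congr 1
          ext x
          refine and_congr_right fun hx => ?_
          rw [signomial_eq_rpow_mul c a b hx, mul_eq_zero, or_iff_right (rpow_pos_of_pos hx b).ne']
      _ ≤ {x ∈ Ioi 0 | signomial (c * w) (fun i => w i - 1) x = 0}.encard + 1 :=
          encard_zeros_le_encard_zeros_deriv_add_one ordConnected_Ioi
            fun x hx => hasDerivAt_signomial c w hx
      _ ≤ n + 1 := by gcongr; exact ih hcw hw hn'

end Signomial

/-- Generalized Descartes' rule of signs: for real numbers `c₁, …, c_m` not all zero
and strictly increasing real exponents `a₁ < ⋯ < a_m`, the number of positive roots of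
`x ↦ ∑ i, c i * x ^ a i` is at most the number of sign alternations of `(c₁, …, c_m)`;
in particular, if all `c i` are nonzero, it is at most `m − 1`.
(`^` is `Real.rpow`.) -/
theorem generalized_descartes_rule_of_signs
    (m : ℕ) (c : Fin m → ℝ) (hc : ∃ i, c i ≠ 0) (a : Fin m → ℝ) (ha : StrictMono a) :
    {x : ℝ | 0 < x ∧ ∑ i, c i * x ^ a i = 0}.encard ≤ (signAlternations c : ℕ∞) ∧
    ((∀ i, c i ≠ 0) →
      {x : ℝ | 0 < x ∧ ∑ i, c i * x ^ a i = 0}.encard ≤ ((m - 1 : ℕ) : ℕ∞)) := by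
  have hroots := encard_pos_zeros_signomial_le_signAlternations hc ha
  exact ⟨hroots, fun _ => hroots.trans (by exact_mod_cast signAlternations_le_sub_one c)⟩
end
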